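/- For every integer n ≥ 3, the strong colour graph S_3(C_n) of the cycle on n vertices is not connected. -/

import Mathlib

/-- A strong `k`-colouring of `G`: a proper colouring using all `k` colours. -/
def IsStrongColoring {V : Type*} {k : ℕ} (G : SimpleGraph V) (α : V → Fin k) : Prop :=
  (∀ ⦃u v⦄, G.Adj u v → α u ≠ α v) ∧ Function.Surjective α

/-- The strong `k`-colour graph `S_k(G)`: vertices are strong `k`-colourings,
two colourings adjacent iff they differ on exactly one vertex. -/
def strongColorGraph {V : Type*} (G : SimpleGraph V) (k : ℕ) :
    SimpleGraph {α : V → Fin k // IsStrongColoring G α} where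
  Adj α β := ∃! v, α.1 v ≠ β.1 v
  symm := by
    refine ⟨?_⟩
    rintro a b ⟨v, hv, hu⟩
    exact ⟨v, hv.symm, fun w hw => hu w hw.symm⟩
  loopless := by
    refine ⟨?_⟩
    rintro a ⟨v, hv, -⟩
    exact hv rfl

/-!
Identify the colours `Fin 3` with `ℤ/3` and let the winding number of a colouring `α` of `C_n`
be the number of edges `i → i + 1` along which the colour goes up by one minus the number along
which it goes down by one; it is three times the degree of `α` as a map `C_n → C_3`.
A vertex `v` of a proper colouring can be recoloured only if both of its neighbours carry the
same colour `c`, and then the two steps `c → α v → c` are replaced by `c → β v → c`; both pairs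
contribute zero, so the winding number is constant on components of `S_3(C_n)`. Negating all
colours negates it, so a strong colouring with nonzero winding number, which exists for every
`n ≥ 3` except `n = 4`, lies in a different component from its negation. For `n = 4` every
winding number vanishes, but the colouring `0102` is an isolated vertex of `S_3(C_4)`.
-/

open SimpleGraph Function

theorem IsStrongColoring.neg {V : Type*} {G : SimpleGraph V} {k : ℕ} {α : V → Fin k}
    (h : IsStrongColoring G α) : IsStrongColoring G (-α) :=
  ⟨fun _ _ huv hne => h.1 huv (neg_inj.mp hne), neg_surjective.comp h.2⟩

theorem isStrongColoring_cycleGraph_iff {n k : ℕ} {α : Fin (n + 2) → Fin k} :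
    IsStrongColoring (cycleGraph (n + 2)) α ↔ (∀ i, α i ≠ α (i + 1)) ∧ Surjective α := by
  refine and_congr_left' ⟨fun h i => h (cycleGraph_adj.2 (Or.inr (add_sub_cancel_left i 1))),
    fun h u v huv => ?_⟩
  rcases cycleGraph_adj.1 huv with huv | huv
  · rw [eq_add_of_sub_eq' huv]
    exact (h v).symm
  · rw [eq_add_of_sub_eq' huv]
    exact h u

namespace CycleColoring

def step (a b : Fin 3) : ℤ :=
  if b = a + 1 then 1 else if b = a - 1 then -1 else 0

theorem step_add_step_swap {a b : Fin 3} (h : a ≠ b) : step a b + step b a = 0 := by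
  revert a b; decide

theorem step_neg_neg (a b : Fin 3) : step (-a) (-b) = -step a b := by
  revert a b; decide

theorem step_add_one (a : Fin 3) : step a (a + 1) = 1 := by
  revert a; decide

theorem neg_one_le_step (a b : Fin 3) : -1 ≤ step a b := by
  revert a b; decide

theorem eq_of_avoided_by_pair {a b x y : Fin 3} (hxy : x ≠ y) (hxa : x ≠ a) (hxb : x ≠ b)
    (hya : y ≠ a) (hyb : y ≠ b) : a = b := by
  revert a b x y; decide

section Winding

variable {n : ℕ} [NeZero n]

def winding (α : Fin n → Fin 3) : ℤ := ∑ i, step (α i) (α (i + 1))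

theorem winding_neg (α : Fin n → Fin 3) : winding (-α) = -winding α := by
  simp only [winding, Pi.neg_apply, step_neg_neg, Finset.sum_neg_distrib]

theorem winding_update {α : Fin n → Fin 3} {v : Fin n} {c : Fin 3}
    (hα : ∀ i, α i ≠ α (i + 1)) (hβ : ∀ i, update α v c i ≠ update α v c (i + 1)) :
    winding (update α v c) = winding α := by
  obtain rfl | hc := eq_or_ne c (α v)
  · rw [update_eq_self]
  have hone : (1 : Fin n) ≠ 0 := fun h => hα v (by rw [h, add_zero])
  have hprev : v - 1 ≠ v := fun h => hone (sub_eq_self.mp h)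
  have hnext : v + 1 ≠ v := fun h => hone (add_eq_left.mp h)
  have hβprev := hβ (v - 1)
  have hβnext := hβ v
  rw [sub_add_cancel, update_self, update_of_ne hprev] at hβprev
  rw [update_self, update_of_ne hnext] at hβnext
  have hαprev := hα (v - 1)
  rw [sub_add_cancel] at hαprev
  have hsame : α (v - 1) = α (v + 1) :=
    eq_of_avoided_by_pair hc.symm hαprev.symm (hα v) hβprev.symm hβnext
  rw [winding, winding, ← sub_eq_zero, ← Finset.sum_sub_distrib,
    Fintype.sum_eq_add (v - 1) v hprev]
  · simp only [sub_add_cancel, update_self, update_of_ne hprev, update_of_ne hnext, ← hsame]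
    linarith [step_add_step_swap hαprev, step_add_step_swap hβprev]
  · rintro i ⟨hi_prev, hi⟩
    have hi_succ : i + 1 ≠ v := fun h => hi_prev (eq_sub_of_add_eq h)
    rw [update_of_ne hi, update_of_ne hi_succ, sub_self]

end Winding

section Cycle

variable {n : ℕ}

theorem winding_eq_of_adj
    {a b : {α : Fin (n + 2) → Fin 3 // IsStrongColoring (cycleGraph (n + 2)) α}}
    (h : (strongColorGraph (cycleGraph (n + 2)) 3).Adj a b) : winding a.1 = winding b.1 := by
  obtain ⟨v, -, huniq⟩ := h
  have hb : b.1 = update a.1 v (b.1 v) := by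
    funext w
    obtain rfl | hw := eq_or_ne w v
    · rw [update_self]
    · rw [update_of_ne hw]
      exact (not_imp_comm.mp (huniq w) hw).symm
  have hβ := (isStrongColoring_cycleGraph_iff.1 b.2).1
  rw [hb] at hβ ⊢
  exact (winding_update (isStrongColoring_cycleGraph_iff.1 a.2).1 hβ).symm

theorem winding_eq_of_reachable
    {a b : {α : Fin (n + 2) → Fin 3 // IsStrongColoring (cycleGraph (n + 2)) α}}
    (h : (strongColorGraph (cycleGraph (n + 2)) 3).Reachable a b) :
    winding a.1 = winding b.1 := by
  obtain ⟨p⟩ := h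
  induction p with
  | nil => rfl
  | cons hadj _ ih => exact (winding_eq_of_adj hadj).trans ih

theorem not_preconnected_of_winding_ne_zero {α : Fin (n + 2) → Fin 3}
    (hα : IsStrongColoring (cycleGraph (n + 2)) α) (hw : winding α ≠ 0) :
    ¬(strongColorGraph (cycleGraph (n + 2)) 3).Preconnected := fun h => by
  have h_eq := winding_eq_of_reachable (h ⟨α, hα⟩ ⟨-α, hα.neg⟩)
  rw [winding_neg] at h_eq
  exact hw (by linarith)

end Cycle

/-- Has winding number `n`, `n - 4` or `n - 2` according as `n ≡ 0, 1, 2 [MOD 3]`. -/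
def windingColoring (n : ℕ) : Fin n → Fin 3 := fun i =>
  if n % 3 = 1 ∧ i.val + 1 = n then 1 else ⟨i.val % 3, Nat.mod_lt _ three_pos⟩

theorem val_windingColoring {n : ℕ} (i : Fin n) :
    (windingColoring n i).val = if n % 3 = 1 ∧ i.val + 1 = n then 1 else i.val % 3 := by
  unfold windingColoring
  split_ifs <;> rfl

theorem isStrongColoring_windingColoring (n : ℕ) :
    IsStrongColoring (cycleGraph (n + 3)) (windingColoring (n + 3)) := by
  refine isStrongColoring_cycleGraph_iff.2 ⟨fun i => ?_, fun c => ⟨⟨c.val, by omega⟩, ?_⟩⟩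
  · obtain ⟨i, hi⟩ := i
    rw [Ne, Fin.ext_iff, val_windingColoring, val_windingColoring]
    obtain hlt | rfl : i + 1 < n + 3 ∨ i = n + 2 := by omega
    · rw [Fin.val_add_one_of_lt' hlt, Fin.val_mk]
      split <;> split <;> omega
    · rw [show (⟨n + 2, hi⟩ + 1 : Fin (n + 3)) = 0 from Fin.last_add_one (n + 2), Fin.val_zero,
        Fin.val_mk]
      split <;> split <;> omega
  · rw [Fin.ext_iff, val_windingColoring, Fin.val_mk]
    split <;> omega

theorem step_windingColoring {n : ℕ} [NeZero n] {i : Fin n} (hi : i.val + 2 < n) :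
    step (windingColoring n i) (windingColoring n (i + 1)) = 1 := by
  have hsucc : windingColoring n (i + 1) = windingColoring n i + 1 := by
    rw [Fin.ext_iff, Fin.val_add, val_windingColoring, val_windingColoring,
      Fin.val_add_one_of_lt' (by omega), Fin.val_one]
    split_ifs <;> omega
  rw [hsucc, step_add_one]

theorem le_winding_windingColoring (n : ℕ) :
    (n : ℤ) - 1 ≤ winding (windingColoring (n + 3)) := by
  have hinterior : ∀ j : Fin (n + 1), step (windingColoring (n + 3) j.castSucc.castSucc)
      (windingColoring (n + 3) (j.castSucc.castSucc + 1)) = 1 :=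
    fun j => step_windingColoring (by simp only [Fin.val_castSucc]; omega)
  rw [winding, Fin.sum_univ_castSucc, Fin.sum_univ_castSucc]
  simp only [hinterior, Finset.sum_const, Finset.card_univ, Fintype.card_fin, nsmul_eq_mul,
    mul_one]
  push_cast
  linarith [neg_one_le_step (windingColoring (n + 3) (Fin.last (n + 1)).castSucc)
      (windingColoring (n + 3) ((Fin.last (n + 1)).castSucc + 1)),
    neg_one_le_step (windingColoring (n + 3) (Fin.last (n + 2)))
      (windingColoring (n + 3) (Fin.last (n + 2) + 1))]

theorem winding_windingColoring_pos {n : ℕ} (hn : n ≠ 1) :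
    0 < winding (windingColoring (n + 3)) := by
  obtain rfl | hn0 := eq_or_ne n 0
  · decide
  · linarith [le_winding_windingColoring n, (by norm_cast; omega : (2 : ℤ) ≤ n)]

end CycleColoring

theorem isStrongColoring_cycleGraph_four :
    IsStrongColoring (cycleGraph 4) (![0, 1, 0, 2] : Fin 4 → Fin 3) :=
  isStrongColoring_cycleGraph_iff.2 (by decide)

theorem isIsolated_strongColorGraph_cycleGraph_four :
    (strongColorGraph (cycleGraph 4) 3).IsIsolated ⟨_, isStrongColoring_cycleGraph_four⟩ := by
  rintro ⟨β, hβ⟩ ⟨v, hv, huniq⟩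
  rw [isStrongColoring_cycleGraph_iff] at hβ
  -- recolouring a vertex of `0102` either breaks properness or loses the colour `1` or `2`
  have hfrozen : ∀ β : Fin 4 → Fin 3, (∀ i, β i ≠ β (i + 1)) → Surjective β →
      ∀ v, ![0, 1, 0, 2] v ≠ β v → ∃ w ≠ v, ![0, 1, 0, 2] w ≠ β w := by
    decide
  obtain ⟨w, hwv, hw⟩ := hfrozen β hβ.1 hβ.2 v hv
  exact hwv (huniq w hw)

theorem not_connected_strongColorGraph_cycleGraph_four :
    ¬(strongColorGraph (cycleGraph 4) 3).Connected := fun h => by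
  have hne : (![0, 1, 0, 2] : Fin 4 → Fin 3) ≠ -![0, 1, 0, 2] := by decide
  have : Nontrivial {α : Fin 4 → Fin 3 // IsStrongColoring (cycleGraph 4) α} :=
    nontrivial_of_ne ⟨_, isStrongColoring_cycleGraph_four⟩
      ⟨_, isStrongColoring_cycleGraph_four.neg⟩ (Subtype.coe_ne_coe.mp hne)
  exact h.preconnected.not_isIsolated _ isIsolated_strongColorGraph_cycleGraph_four

/-- For every `n ≥ 3`, the strong colour graph `S_3(C_n)` is not connected. -/
theorem strongColorGraph_cycleGraph_three_not_connected
    {n : ℕ} (hn : 3 ≤ n) :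
    ¬(strongColorGraph (SimpleGraph.cycleGraph n) 3).Connected := by
  obtain ⟨m, rfl⟩ : ∃ m, n = m + 3 := ⟨n - 3, by omega⟩
  obtain rfl | hm := eq_or_ne m 1
  · exact not_connected_strongColorGraph_cycleGraph_four
  · exact fun h => CycleColoring.not_preconnected_of_winding_ne_zero
      (CycleColoring.isStrongColoring_windingColoring m)
      (CycleColoring.winding_windingColoring_pos hm).ne' h.preconnected
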